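/- Fix an integer m ≥ 1, a configuration ξ_0 ∈ {0,1,2}^{ℤ²}, and a finite nonempty set Z ⊂ ℤ² satisfying: (PR1) every u ∈ Z with at least two nearest neighbors in Z^c has all but one of those Z^c-neighbors being vertices that remain in state 0 forever in the full dynamics; (PR2) for each u ∈ Z with a neighbor in Z^c, every v ∈ Z within ℓ∞-distance m of u has ξ_0(v) ≤ 1; and (PR3) the internal dynamics on Z, started from ξ_0 with all 0s in Z replaced by 1s, produces no connected set of state-2 vertices in Z of ℓ∞-diameter larger than m/2 in its final configuration. Run the full modified two-stage dynamics ξ_t on ℤ² and the internal dynamics ξ_t^Z on Z. Then for every t ≥ 0 and every u ∈ Z: if ξ_t(u) = 2 then ξ_t^Z(u) = 2. -/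

import Mathlib

/-- The four nearest neighbors of a vertex of `ℤ²`. -/
def neighbors (v : ℤ × ℤ) : List (ℤ × ℤ) :=
  [(v.1 + 1, v.2), (v.1 - 1, v.2), (v.1, v.2 + 1), (v.1, v.2 - 1)]

/-- One step of the modified two-stage bootstrap percolation on `ℤ²`. -/
def mstep (ξ : ℤ × ℤ → Fin 3) : ℤ × ℤ → Fin 3 := fun v =>
  if ξ v = 0 then
    (if (ξ (v.1 + 1, v.2) = 1 ∨ ξ (v.1 - 1, v.2) = 1) ∧
        (ξ (v.1, v.2 + 1) = 1 ∨ ξ (v.1, v.2 - 1) = 1) then 1 else 0)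
  else if ξ v = 1 then
    (if 2 ≤ (neighbors v).countP (fun w => decide (ξ w = 2)) then 2 else 1)
  else 2

/-- One step of the modified dynamics internal to `Z` (neighborhoods restricted to `Z`). -/
def mstepIn (Z : Finset (ℤ × ℤ)) (ξ : ℤ × ℤ → Fin 3) : ℤ × ℤ → Fin 3 := fun v =>
  if ξ v = 0 then
    (if (((v.1 + 1, v.2) ∈ Z ∧ ξ (v.1 + 1, v.2) = 1) ∨
          ((v.1 - 1, v.2) ∈ Z ∧ ξ (v.1 - 1, v.2) = 1)) ∧
        (((v.1, v.2 + 1) ∈ Z ∧ ξ (v.1, v.2 + 1) = 1) ∨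
          ((v.1, v.2 - 1) ∈ Z ∧ ξ (v.1, v.2 - 1) = 1)) then 1 else 0)
  else if ξ v = 1 then
    (if 2 ≤ (neighbors v).countP (fun w => decide (w ∈ Z) && decide (ξ w = 2)) then 2
     else 1)
  else 2

/-- The initial configuration of the internal dynamics on `Z`: all 0s replaced by 1s. -/
def initZ (ξ0 : ℤ × ℤ → Fin 3) : ℤ × ℤ → Fin 3 := fun v => if ξ0 v = 0 then 1 else ξ0 v

/-- Nearest-neighbor adjacency in `ℤ²`. -/
def Adj (u v : ℤ × ℤ) : Prop := (u.1 - v.1).natAbs + (u.2 - v.2).natAbs = 1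

/-- A finite set is connected for nearest-neighbor adjacency. -/
def ConnectedIn (C : Finset (ℤ × ℤ)) : Prop :=
  ∀ u ∈ C, ∀ v ∈ C, ∃ l : List (ℤ × ℤ), (∀ w ∈ l, w ∈ C) ∧ List.Chain Adj u l ∧
    (u :: l).getLast (by simp) = v

/-!
A vertex of `Z` can turn 2 in the full dynamics earlier than in the internal one only through a
state-2 neighbour outside `Z`. By (PR1) at most one such neighbour is ever in state 2, so the
vertex `u` is on the boundary and its other state-2 neighbour `v` lies in `Z`. Following state-2
neighbours inside `Z` backwards in time, `v` is joined by a path of state-2 vertices of `Z` to a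
vertex `z` with `ξ₀ z = 2`. By minimality of the time of disagreement this path is also 2 in the
internal dynamics, so (PR3) puts `z` within `ℓ∞`-distance `m / 2 + 1 ≤ m` of `u`, contradicting
(PR2).
-/

open Relation

lemma Fin.three_cases (x : Fin 3) : x = 0 ∨ x = 1 ∨ x = 2 := by
  fin_cases x <;> simp

lemma List.two_le_countP_iff_of_nodup {α : Type*} [DecidableEq α] {l : List α} (hl : l.Nodup)
    {p : α → Bool} : 2 ≤ l.countP p ↔ ∃ a ∈ l, ∃ b ∈ l, a ≠ b ∧ p a ∧ p b := by
  change 1 < _ ↔ _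
  rw [List.countP_eq_length_filter, ← List.toFinset_card_of_nodup (hl.filter p),
    Finset.one_lt_card]
  simp only [List.mem_toFinset, List.mem_filter]
  grind

lemma neighbors_nodup (v : ℤ × ℤ) : (neighbors v).Nodup := by
  simp only [neighbors, List.nodup_cons, List.mem_cons, Prod.ext_iff, List.not_mem_nil,
    List.nodup_nil, and_true, true_and, or_false, not_false_eq_true]
  omega

lemma adj_of_mem_neighbors {v w : ℤ × ℤ} (h : w ∈ neighbors v) : Adj v w := by
  simp only [neighbors, List.mem_cons, List.not_mem_nil, or_false] at h
  rcases h with rfl | rfl | rfl | rfl <;> simp [Adj]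

lemma adj_symm {u v : ℤ × ℤ} (h : Adj u v) : Adj v u := by
  unfold Adj at *
  omega

def AdjWithin (C : Finset (ℤ × ℤ)) (x y : ℤ × ℤ) : Prop := x ∈ C ∧ y ∈ C ∧ Adj x y

instance (C : Finset (ℤ × ℤ)) : Std.Symm (AdjWithin C) :=
  ⟨fun _ _ ⟨hx, hy, h⟩ => ⟨hy, hx, adj_symm h⟩⟩

lemma AdjWithin.mono {C D : Finset (ℤ × ℤ)} (hCD : C ⊆ D) : AdjWithin C ≤ AdjWithin D :=
  fun _ _ h => ⟨hCD h.1, hCD h.2.1, h.2.2⟩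

lemma connectedIn_of_reflTransGen {C : Finset (ℤ × ℤ)}
    (h : ∀ u ∈ C, ∀ v ∈ C, ReflTransGen (AdjWithin C) u v) : ConnectedIn C := by
  intro u hu v hv
  obtain ⟨l, hl, hlast⟩ := List.exists_isChain_cons_of_relationReflTransGen (h u hu v hv)
  refine ⟨l, fun w hw => ?_, hl.imp fun _ _ h => h.2.2, hlast⟩
  exact hl.induction (· ∈ C) _ (fun _ _ h _ => h.2.1) (fun _ => hu) w (List.mem_cons_of_mem u hw)

lemma connectedIn_toFinset_of_isChain {a : ℤ × ℤ} {l : List (ℤ × ℤ)}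
    (hl : (a :: l).IsChain Adj) : ConnectedIn (a :: l).toFinset := by
  set C := (a :: l).toFinset
  have hC : (a :: l).IsChain (AdjWithin C) :=
    hl.imp_of_mem_imp fun x y hx hy h => ⟨List.mem_toFinset.2 hx, List.mem_toFinset.2 hy, h⟩
  have from_head : ∀ x ∈ C, ReflTransGen (AdjWithin C) a x := fun x hx =>
    hC.induction (ReflTransGen (AdjWithin C) a ·) _ (fun _ _ h hx => hx.tail h)
      (fun _ => ReflTransGen.refl) x (List.mem_toFinset.1 hx)
  refine connectedIn_of_reflTransGen fun u hu v hv => ?_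
  exact (Std.Symm.symm _ _ (from_head u hu)).trans (from_head v hv)

def supDist (u v : ℤ × ℤ) : ℕ := max (u.1 - v.1).natAbs (u.2 - v.2).natAbs

lemma supDist_triangle (a b c : ℤ × ℤ) : supDist a c ≤ supDist a b + supDist b c := by
  unfold supDist
  omega

lemma supDist_le_one_of_mem_neighbors {v w : ℤ × ℤ} (h : w ∈ neighbors v) : supDist v w ≤ 1 := by
  simp only [neighbors, List.mem_cons, List.not_mem_nil, or_false] at h
  rcases h with rfl | rfl | rfl | rfl <;> simp [supDist]

section Dynamics

variable {Z : Finset (ℤ × ℤ)} {ξ : ℤ × ℤ → Fin 3} {v : ℤ × ℤ}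

lemma mstep_eq_two_of_eq_two (h : ξ v = 2) : mstep ξ v = 2 := by
  simp [mstep, h]

lemma mstepIn_eq_two_of_eq_two (h : ξ v = 2) : mstepIn Z ξ v = 2 := by
  simp [mstepIn, h]

lemma eq_two_or_exists_neighbors_of_mstep_eq_two (h : mstep ξ v = 2) :
    ξ v = 2 ∨ ∃ w₁ ∈ neighbors v, ∃ w₂ ∈ neighbors v, w₁ ≠ w₂ ∧ ξ w₁ = 2 ∧ ξ w₂ = 2 := by
  rcases Fin.three_cases (ξ v) with h0 | h1 | h2
  · simp only [mstep, h0, if_true] at h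
    split_ifs at h <;> exact absurd h (by decide)
  · simp only [mstep, h1, if_true, Fin.reduceEq, if_false] at h
    split_ifs at h with hcount
    · right
      simpa using (List.two_le_countP_iff_of_nodup (neighbors_nodup v)).1 hcount
    · exact absurd h (by decide)
  · exact Or.inl h2

lemma mstepIn_eq_two_of_neighbors (hv : ξ v ≠ 0) {w₁ w₂ : ℤ × ℤ} (hw₁ : w₁ ∈ neighbors v)
    (hw₂ : w₂ ∈ neighbors v) (hne : w₁ ≠ w₂) (hZ₁ : w₁ ∈ Z) (hZ₂ : w₂ ∈ Z) (h₁ : ξ w₁ = 2)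
    (h₂ : ξ w₂ = 2) : mstepIn Z ξ v = 2 := by
  rcases Fin.three_cases (ξ v) with h0 | h1 | h2
  · exact absurd h0 hv
  · have hcount : 2 ≤ (neighbors v).countP (fun w => decide (w ∈ Z) && decide (ξ w = 2)) :=
      (List.two_le_countP_iff_of_nodup (neighbors_nodup v)).2
        ⟨w₁, hw₁, w₂, hw₂, hne, by simp [hZ₁, h₁], by simp [hZ₂, h₂]⟩
    simp only [mstepIn, h1, hcount, if_true, Fin.reduceEq, if_false]
  · exact mstepIn_eq_two_of_eq_two h2

lemma iterate_mstepIn_initZ_ne_zero (ξ₀ : ℤ × ℤ → Fin 3) (t : ℕ) (v : ℤ × ℤ) :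
    (mstepIn Z)^[t] (initZ ξ₀) v ≠ 0 := by
  induction t generalizing v with
  | zero => rcases Fin.three_cases (ξ₀ v) with h | h | h <;> simp [initZ, h]
  | succ s ih =>
    rw [Function.iterate_succ_apply']
    rcases Fin.three_cases ((mstepIn Z)^[s] (initZ ξ₀) v) with h | h | h
    · exact absurd h (ih v)
    · simp only [mstepIn, h, if_true, Fin.reduceEq, if_false]
      split_ifs <;> decide
    · simp [mstepIn_eq_two_of_eq_two h]

end Dynamics

section ProtectedRegion

variable {ξ₀ : ℤ × ℤ → Fin 3} {Z : Finset (ℤ × ℤ)}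

/-- Condition (PR1). -/
def OutsideNeighborsBlocked (ξ₀ : ℤ × ℤ → Fin 3) (Z : Finset (ℤ × ℤ)) : Prop :=
  ∀ u ∈ Z, ∀ w1 ∈ neighbors u, ∀ w2 ∈ neighbors u, w1 ≠ w2 → w1 ∉ Z → w2 ∉ Z →
    (∀ t : ℕ, mstep^[t] ξ₀ w1 = 0) ∨ (∀ t : ℕ, mstep^[t] ξ₀ w2 = 0)

lemma OutsideNeighborsBlocked.mem_or_mem (hPR1 : OutsideNeighborsBlocked ξ₀ Z) {s : ℕ}
    {u w₁ w₂ : ℤ × ℤ} (hu : u ∈ Z) (hw₁ : w₁ ∈ neighbors u) (hw₂ : w₂ ∈ neighbors u)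
    (hne : w₁ ≠ w₂) (h₁ : mstep^[s] ξ₀ w₁ = 2) (h₂ : mstep^[s] ξ₀ w₂ = 2) : w₁ ∈ Z ∨ w₂ ∈ Z := by
  by_contra! hout
  rcases hPR1 u hu w₁ hw₁ w₂ hw₂ hne hout.1 hout.2 with h | h
  · simp [h s] at h₁
  · simp [h s] at h₂

lemma OutsideNeighborsBlocked.exists_initial_two (hPR1 : OutsideNeighborsBlocked ξ₀ Z)
    (s : ℕ) {v : ℤ × ℤ} (hv : v ∈ Z) (h : mstep^[s] ξ₀ v = 2) :
    ∃ z, ξ₀ z = 2 ∧ ReflTransGen (AdjWithin {w ∈ Z | mstep^[s] ξ₀ w = 2}) v z := by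
  induction s generalizing v with
  | zero => exact ⟨v, h, ReflTransGen.refl⟩
  | succ s ih =>
    have hsub : {w ∈ Z | mstep^[s] ξ₀ w = 2} ⊆ {w ∈ Z | mstep^[s + 1] ξ₀ w = 2} := by
      intro w hw
      simp only [Finset.mem_filter, Function.iterate_succ_apply'] at hw ⊢
      exact ⟨hw.1, mstep_eq_two_of_eq_two hw.2⟩
    have hmono := ReflTransGen.mono (AdjWithin.mono hsub)
    rw [Function.iterate_succ_apply'] at h
    rcases eq_two_or_exists_neighbors_of_mstep_eq_two h with h2 | ⟨w₁, hw₁, w₂, hw₂, hne, h₁, h₂⟩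
    · obtain ⟨z, hz, hvz⟩ := ih hv h2
      exact ⟨z, hz, hmono _ _ hvz⟩
    · obtain ⟨w, hw, hwZ, hw2⟩ : ∃ w ∈ neighbors v, w ∈ Z ∧ mstep^[s] ξ₀ w = 2 := by
        rcases hPR1.mem_or_mem hv hw₁ hw₂ hne h₁ h₂ with hZ | hZ
        exacts [⟨w₁, hw₁, hZ, h₁⟩, ⟨w₂, hw₂, hZ, h₂⟩]
      obtain ⟨z, hz, hwz⟩ := ih hwZ hw2
      have hvw : AdjWithin {w ∈ Z | mstep^[s + 1] ξ₀ w = 2} v w :=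
        ⟨by simp [hv, Function.iterate_succ_apply', h],
          hsub (Finset.mem_filter.2 ⟨hwZ, hw2⟩), adj_of_mem_neighbors hw⟩
      exact ⟨z, hz, ReflTransGen.head hvw (hmono _ _ hwz)⟩

lemma mem_of_neighbors_eq_two {m : ℕ} (hm : 1 ≤ m) (hPR1 : OutsideNeighborsBlocked ξ₀ Z)
    (PR2 : ∀ u ∈ Z, (∃ w ∈ neighbors u, w ∉ Z) → ∀ v ∈ Z, supDist u v ≤ m → ξ₀ v ≠ 2)
    (PR3 : ∀ C : Finset (ℤ × ℤ), (∀ v ∈ C, v ∈ Z) → ConnectedIn C →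
      (∀ v ∈ C, ∃ t : ℕ, (mstepIn Z)^[t] (initZ ξ₀) v = 2) →
      ∀ u ∈ C, ∀ v ∈ C, 2 * supDist u v ≤ m)
    {s : ℕ} (ih : ∀ u ∈ Z, mstep^[s] ξ₀ u = 2 → (mstepIn Z)^[s] (initZ ξ₀) u = 2)
    {u w v : ℤ × ℤ} (hu : u ∈ Z) (hw : w ∈ neighbors u) (hv : v ∈ neighbors u) (hne : w ≠ v)
    (hw2 : mstep^[s] ξ₀ w = 2) (hv2 : mstep^[s] ξ₀ v = 2) : w ∈ Z := by
  by_contra hwZ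
  have hvZ := (hPR1.mem_or_mem hu hw hv hne hw2 hv2).resolve_left hwZ
  set S := {x ∈ Z | mstep^[s] ξ₀ x = 2}
  obtain ⟨z, hz, hvz⟩ := hPR1.exists_initial_two s hvZ hv2
  obtain ⟨l, hl, hlast⟩ := List.exists_isChain_cons_of_relationReflTransGen hvz
  set C := (v :: l).toFinset
  have hCS : ∀ x ∈ C, x ∈ S := fun x hx =>
    hl.induction (· ∈ S) _ (fun _ _ h _ => h.2.1) (fun _ => Finset.mem_filter.2 ⟨hvZ, hv2⟩) x
      (List.mem_toFinset.1 hx)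
  have hCZ : ∀ x ∈ C, x ∈ Z := fun x hx => (Finset.mem_filter.1 (hCS x hx)).1
  have hC2 : ∀ x ∈ C, ∃ t, (mstepIn Z)^[t] (initZ ξ₀) x = 2 := fun x hx =>
    ⟨s, ih x (hCZ x hx) (Finset.mem_filter.1 (hCS x hx)).2⟩
  have hzC : z ∈ C := hlast ▸ List.mem_toFinset.2 (List.getLast_mem _)
  have hvz_near := PR3 C hCZ (connectedIn_toFinset_of_isChain (hl.imp fun _ _ h => h.2.2)) hC2 v
    (List.mem_toFinset.2 List.mem_cons_self) z hzC
  have huz_far := PR2 u hu ⟨w, hw, hwZ⟩ z (hCZ z hzC)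
  have huv := supDist_le_one_of_mem_neighbors hv
  exact huz_far (by have := supDist_triangle u v z; omega) hz

end ProtectedRegion

theorem stmt19_general (m : ℕ) (hm : 1 ≤ m) (ξ0 : ℤ × ℤ → Fin 3)
    (Z : Finset (ℤ × ℤ))
    (PR1 : ∀ u ∈ Z, ∀ w1 ∈ neighbors u, ∀ w2 ∈ neighbors u, w1 ≠ w2 →
      w1 ∉ Z → w2 ∉ Z →
      (∀ t : ℕ, mstep^[t] ξ0 w1 = 0) ∨ (∀ t : ℕ, mstep^[t] ξ0 w2 = 0))
    (PR2 : ∀ u ∈ Z, (∃ w ∈ neighbors u, w ∉ Z) → ∀ v ∈ Z,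
      max (u.1 - v.1).natAbs (u.2 - v.2).natAbs ≤ m → ξ0 v ≠ 2)
    (PR3 : ∀ C : Finset (ℤ × ℤ), (∀ v ∈ C, v ∈ Z) → ConnectedIn C →
      (∀ v ∈ C, ∃ t : ℕ, (mstepIn Z)^[t] (initZ ξ0) v = 2) →
      ∀ u ∈ C, ∀ v ∈ C, 2 * max (u.1 - v.1).natAbs (u.2 - v.2).natAbs ≤ m) :
    ∀ t : ℕ, ∀ u ∈ Z, mstep^[t] ξ0 u = 2 → (mstepIn Z)^[t] (initZ ξ0) u = 2 := by
  intro t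
  induction t with
  | zero => intro u _ hu; simp_all [initZ]
  | succ s ih =>
    intro u hu h
    rw [Function.iterate_succ_apply'] at h ⊢
    rcases eq_two_or_exists_neighbors_of_mstep_eq_two h with h2 | ⟨w₁, hw₁, w₂, hw₂, hne, h₁, h₂⟩
    · exact mstepIn_eq_two_of_eq_two (ih u hu h2)
    have hZ₁ := mem_of_neighbors_eq_two hm PR1 PR2 PR3 ih hu hw₁ hw₂ hne h₁ h₂
    have hZ₂ := mem_of_neighbors_eq_two hm PR1 PR2 PR3 ih hu hw₂ hw₁ hne.symm h₂ h₁
    exact mstepIn_eq_two_of_neighbors (iterate_mstepIn_initZ_ne_zero ξ0 s u) hw₁ hw₂ hne hZ₁ hZ₂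
      (ih w₁ hZ₁ h₁) (ih w₂ hZ₂ h₂)

/-- Protected-region comparison: under (PR1) (among any two `Zᶜ`-neighbors of a vertex of
`Z`, at least one remains in state 0 forever in the full dynamics), (PR2) (no initial 2
within `ℓ∞`-distance `m` in `Z` of a boundary vertex of `Z`) and (PR3) (the internal
dynamics on `Z` started with 0s replaced by 1s produces no connected state-2 set of
`ℓ∞`-diameter `> m/2`), any vertex of `Z` that is in state 2 at time `t` in the full
modified dynamics is also in state 2 at time `t` in the internal dynamics. -/
theorem stmt19 (m : ℕ) (hm : 1 ≤ m) (ξ0 : ℤ × ℤ → Fin 3)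
    (Z : Finset (ℤ × ℤ)) (hZ : Z.Nonempty)
    (PR1 : ∀ u ∈ Z, ∀ w1 ∈ neighbors u, ∀ w2 ∈ neighbors u, w1 ≠ w2 →
      w1 ∉ Z → w2 ∉ Z →
      (∀ t : ℕ, mstep^[t] ξ0 w1 = 0) ∨ (∀ t : ℕ, mstep^[t] ξ0 w2 = 0))
    (PR2 : ∀ u ∈ Z, (∃ w ∈ neighbors u, w ∉ Z) → ∀ v ∈ Z,
      max (u.1 - v.1).natAbs (u.2 - v.2).natAbs ≤ m → ξ0 v ≠ 2)
    (PR3 : ∀ C : Finset (ℤ × ℤ), (∀ v ∈ C, v ∈ Z) → ConnectedIn C →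
      (∀ v ∈ C, ∃ t : ℕ, (mstepIn Z)^[t] (initZ ξ0) v = 2) →
      ∀ u ∈ C, ∀ v ∈ C, 2 * max (u.1 - v.1).natAbs (u.2 - v.2).natAbs ≤ m) :
    ∀ t : ℕ, ∀ u ∈ Z, mstep^[t] ξ0 u = 2 → (mstepIn Z)^[t] (initZ ξ0) u = 2 :=
  stmt19_general m hm ξ0 Z PR1 PR2 PR3
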